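/- With A(F) and the integral h as above (h(ã^p b̃^r c̃^s) = δ_{p0}δ_{r2}δ_{s2}), we have h(1) = 0; consequently no nonzero two-sided integral on A(F) is normalizable, i.e. A(F) admits no Haar measure. -/

import Mathlib

open TensorProduct

noncomputable section

/-- `q = e^{2πi/3}`, a primitive cube root of unity. -/
def qc : ℂ := Complex.exp (2 * Real.pi * Complex.I / 3)

/-- generators `a, b, c, d` of the free algebra. -/
def ga : FreeAlgebra ℂ (Fin 4) := FreeAlgebra.ι ℂ 0
def gb : FreeAlgebra ℂ (Fin 4) := FreeAlgebra.ι ℂ 1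
def gc : FreeAlgebra ℂ (Fin 4) := FreeAlgebra.ι ℂ 2
def gd : FreeAlgebra ℂ (Fin 4) := FreeAlgebra.ι ℂ 3

/-- The defining relations of `A(SL_q(2))`. -/
inductive SLqRel : FreeAlgebra ℂ (Fin 4) → FreeAlgebra ℂ (Fin 4) → Prop
  | ab : SLqRel (ga * gb) (qc • (gb * ga))
  | ac : SLqRel (ga * gc) (qc • (gc * ga))
  | bd : SLqRel (gb * gd) (qc • (gd * gb))
  | bc : SLqRel (gb * gc) (gc * gb)
  | cd : SLqRel (gc * gd) (qc • (gd * gc))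
  | comm : SLqRel (ga * gd - gd * ga) ((qc - qc⁻¹) • (gb * gc))
  | det : SLqRel (ga * gd - qc • (gb * gc)) 1
  | det' : SLqRel (gd * ga - qc⁻¹ • (gb * gc)) 1

/-- the coordinate algebra `A(SL_q(2))` at `q = e^{2πi/3}`. -/
abbrev ASLq : Type := RingQuot SLqRel

def a' : ASLq := RingQuot.mkAlgHom ℂ SLqRel ga
def b' : ASLq := RingQuot.mkAlgHom ℂ SLqRel gb
def c' : ASLq := RingQuot.mkAlgHom ℂ SLqRel gc
def d' : ASLq := RingQuot.mkAlgHom ℂ SLqRel gd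

/-- The relations defining the quotient `A(F)` of `A(SL_q(2))`:
`a³ = 1`, `b³ = 0`, `c³ = 0`, `d³ = 1`. -/
inductive FRel : ASLq → ASLq → Prop
  | a : FRel (a' ^ 3) 1
  | b : FRel (b' ^ 3) 0
  | c : FRel (c' ^ 3) 0
  | d : FRel (d' ^ 3) 1

/-- the 27-dimensional Hopf algebra `A(F)`. -/
abbrev AF : Type := RingQuot FRel

def ta : AF := RingQuot.mkAlgHom ℂ FRel a'
def tb : AF := RingQuot.mkAlgHom ℂ FRel b'
def tc : AF := RingQuot.mkAlgHom ℂ FRel c'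
def td : AF := RingQuot.mkAlgHom ℂ FRel d'

/-!
If `φ` is a left integral, apply left invariance to `a² b` and then the functional
`z ↦ h (z * (a b c²))`. The element `c` is normal (`A(F) c = c A(F)`) and `c³ = 0`, so this
functional vanishes on the two-sided ideal generated by `c`; what remains is `q⁻¹ φ(1) = 0`,
because `h` separates `b² c²` from `a² b c²` and `a b c²`. Hence no left integral is normalized.
-/

lemma qc_ne_zero : qc ≠ 0 := Complex.exp_ne_zero _

lemma exists_mul_eq_mul_of_surjective {R A X : Type*} [CommSemiring R] [Semiring A]
    [Algebra R A] (π : FreeAlgebra R X →ₐ[R] A) (hπ : Function.Surjective π) {c : A}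
    (hgen : ∀ i, ∃ g, π (FreeAlgebra.ι R i) * c = c * g)
    (y : A) : ∃ y', y * c = c * y' := by
  obtain ⟨x, rfl⟩ := hπ y
  induction x using FreeAlgebra.induction with
  | grade0 r => exact ⟨algebraMap R A r, by rw [AlgHom.commutes, Algebra.commutes]⟩
  | grade1 i => exact hgen i
  | mul x z hx hz =>
    obtain ⟨x', hx'⟩ := hx
    obtain ⟨z', hz'⟩ := hz
    exact ⟨x' * z', by rw [map_mul, mul_assoc, hz', ← mul_assoc, hx', mul_assoc]⟩
  | add x z hx hz =>
    obtain ⟨x', hx'⟩ := hx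
    obtain ⟨z', hz'⟩ := hz
    exact ⟨x' + z', by rw [map_add, add_mul, hx', hz', mul_add]⟩

def IsLeftIntegral {R A : Type*} [CommSemiring R] [AddCommMonoid A] [Module R A] [One A]
    (Δ : A → A ⊗[R] A) (φ : A →ₗ[R] R) : Prop :=
  ∀ x, TensorProduct.lid R A (TensorProduct.map φ LinearMap.id (Δ x)) = φ x • 1

lemma ta_mul_tc : ta * tc = qc • (tc * ta) := by
  simpa [ta, tc, a', c'] using
    congrArg (RingQuot.mkAlgHom ℂ FRel) (RingQuot.mkAlgHom_rel ℂ SLqRel.ac)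

lemma tc_mul_ta : tc * ta = qc⁻¹ • (ta * tc) := by
  rw [ta_mul_tc, inv_smul_smul₀ qc_ne_zero]

lemma tb_mul_tc : tb * tc = tc * tb := by
  simpa [tb, tc, b', c'] using
    congrArg (RingQuot.mkAlgHom ℂ FRel) (RingQuot.mkAlgHom_rel ℂ SLqRel.bc)

lemma td_mul_tc : td * tc = qc⁻¹ • (tc * td) := by
  have h : tc * td = qc • (td * tc) := by
    simpa [tc, td, c', d'] using
      congrArg (RingQuot.mkAlgHom ℂ FRel) (RingQuot.mkAlgHom_rel ℂ SLqRel.cd)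
  rw [h, inv_smul_smul₀ qc_ne_zero]

lemma tb_mul_ta : tb * ta = qc⁻¹ • (ta * tb) := by
  have h : ta * tb = qc • (tb * ta) := by
    simpa [ta, tb, a', b'] using
      congrArg (RingQuot.mkAlgHom ℂ FRel) (RingQuot.mkAlgHom_rel ℂ SLqRel.ab)
  rw [h, inv_smul_smul₀ qc_ne_zero]

lemma td_mul_ta : td * ta = 1 + qc⁻¹ • (tb * tc) := by
  have h : td * ta - qc⁻¹ • (tb * tc) = 1 := by
    simpa [ta, tb, tc, td, a', b', c', d'] using
      congrArg (RingQuot.mkAlgHom ℂ FRel) (RingQuot.mkAlgHom_rel ℂ SLqRel.det')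
  rw [← h]; abel

lemma ta_pow_three : ta ^ 3 = 1 := by
  simpa [ta] using RingQuot.mkAlgHom_rel ℂ FRel.a

lemma tc_pow_three : tc ^ 3 = 0 := by
  simpa [tc] using RingQuot.mkAlgHom_rel ℂ FRel.c

lemma exists_mul_tc_eq_tc_mul (y : AF) : ∃ y', y * tc = tc * y' := by
  refine exists_mul_eq_mul_of_surjective ((RingQuot.mkAlgHom ℂ FRel).comp
    (RingQuot.mkAlgHom ℂ SLqRel)) ((RingQuot.mkAlgHom_surjective ℂ FRel).comp
      (RingQuot.mkAlgHom_surjective ℂ SLqRel)) (fun i => ?_) y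
  fin_cases i
  · exact ⟨qc • ta, by rw [mul_smul_comm]; exact ta_mul_tc⟩
  · exact ⟨tb, tb_mul_tc⟩
  · exact ⟨tc, rfl⟩
  · exact ⟨qc⁻¹ • td, by rw [mul_smul_comm]; exact td_mul_tc⟩

lemma tc_mul_mul_tc_sq (y : AF) : tc * y * tc ^ 2 = 0 := by
  obtain ⟨y₁, hy₁⟩ := exists_mul_tc_eq_tc_mul y
  obtain ⟨y₂, hy₂⟩ := exists_mul_tc_eq_tc_mul y₁
  calc tc * y * tc ^ 2 = tc * (y * tc) * tc := by noncomm_ring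
    _ = tc ^ 3 * y₂ := by rw [hy₁, mul_assoc tc (tc * y₁), mul_assoc tc y₁, hy₂]; noncomm_ring
    _ = 0 := by rw [tc_pow_three, zero_mul]

lemma mul_tc_mul_mul_tc_sq (x y z : AF) : x * tc * y * (z * tc ^ 2) = 0 := by
  rw [show x * tc * y * (z * tc ^ 2) = x * (tc * (y * z) * tc ^ 2) by noncomm_ring,
    tc_mul_mul_tc_sq, mul_zero]

lemma ta_mul_ta_mul_tb_mul : ta * ta * tb * (ta * tb * tc ^ 2) = qc⁻¹ • (tb ^ 2 * tc ^ 2) := by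
  calc ta * ta * tb * (ta * tb * tc ^ 2) = ta * ta * (tb * ta) * tb * tc ^ 2 := by noncomm_ring
    _ = qc⁻¹ • (ta ^ 3 * tb ^ 2 * tc ^ 2) := by rw [tb_mul_ta]; noncomm_ring
    _ = qc⁻¹ • (tb ^ 2 * tc ^ 2) := by rw [ta_pow_three, one_mul]

lemma ta_mul_ta_mul_td_mul : ta * ta * td * (ta * tb * tc ^ 2) = ta ^ 2 * tb * tc ^ 2 := by
  calc ta * ta * td * (ta * tb * tc ^ 2) = ta * ta * (td * ta) * tb * tc ^ 2 := by noncomm_ring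
    _ = ta ^ 2 * tb * tc ^ 2 + qc⁻¹ • (ta * ta * tb * tc * tb * (1 * tc ^ 2)) := by
      rw [td_mul_ta]; noncomm_ring
    _ = ta ^ 2 * tb * tc ^ 2 := by rw [mul_tc_mul_mul_tc_sq, smul_zero, add_zero]

lemma apply_one_eq_zero_of_isLeftIntegral {Δ : AF →ₐ[ℂ] AF ⊗[ℂ] AF}
    (hΔa : Δ ta = ta ⊗ₜ[ℂ] ta + tb ⊗ₜ[ℂ] tc) (hΔb : Δ tb = ta ⊗ₜ[ℂ] tb + tb ⊗ₜ[ℂ] td)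
    {h : AF →ₗ[ℂ] ℂ} (h022 : h (tb ^ 2 * tc ^ 2) = 1) (h212 : h (ta ^ 2 * tb * tc ^ 2) = 0)
    (h112 : h (ta * tb * tc ^ 2) = 0) {φ : AF →ₗ[ℂ] ℂ} (hφ : IsLeftIntegral Δ φ) :
    φ 1 = 0 := by
  -- `z ↦ h (z * (a b c²))` kills the ideal generated by `c`, so of the eight terms of `Δ (a² b)`
  -- only `1 ⊗ a² b` (contributing `q⁻¹ φ 1`) and `a² b ⊗ a² d` (contributing `0`) survive.
  have key := congrArg (fun z => h (z * (ta * tb * tc ^ 2))) (hφ (ta * ta * tb))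
  simp only [map_mul, hΔa, hΔb, mul_add, add_mul, Algebra.TensorProduct.tmul_mul_tmul, map_add,
    TensorProduct.map_tmul, LinearMap.id_coe, id_eq, TensorProduct.lid_tmul, tc_mul_ta,
    smul_mul_assoc, map_smul, smul_eq_mul, mul_tc_mul_mul_tc_sq, ta_mul_ta_mul_tb_mul,
    ta_mul_ta_mul_td_mul, h022, h212, one_mul, h112, map_zero, mul_zero, add_zero, mul_one,
    ← pow_three', ta_pow_three] at key
  exact (mul_eq_zero.mp key).resolve_right (inv_ne_zero qc_ne_zero)

theorem AF_no_haar_measure_general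
    (Δ : AF →ₐ[ℂ] AF ⊗[ℂ] AF)
    (hΔa : Δ ta = ta ⊗ₜ[ℂ] ta + tb ⊗ₜ[ℂ] tc)
    (hΔb : Δ tb = ta ⊗ₜ[ℂ] tb + tb ⊗ₜ[ℂ] td)
    (h : AF →ₗ[ℂ] ℂ)
    (hh : ∀ p r s : Fin 3, h (ta ^ (p : ℕ) * tb ^ (r : ℕ) * tc ^ (s : ℕ)) =
      if p = 0 ∧ r = 2 ∧ s = 2 then 1 else 0) :
    h 1 = 0 ∧
    ¬ ∃ h' : AF →ₗ[ℂ] ℂ,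
      (∀ x : AF,
        (TensorProduct.rid ℂ AF) ((TensorProduct.map LinearMap.id h') (Δ x)) = h' x • 1) ∧
      (∀ x : AF,
        (TensorProduct.lid ℂ AF) ((TensorProduct.map h' LinearMap.id) (Δ x)) = h' x • 1) ∧
      h' 1 = 1 := by
  refine ⟨by simpa using hh 0 0 0, ?_⟩
  rintro ⟨h', -, hL, h'_one⟩
  have h'_one_eq_zero : h' 1 = 0 := apply_one_eq_zero_of_isLeftIntegral hΔa hΔb
    (by simpa using hh 0 2 2) (by simpa using hh 2 1 2) (by simpa using hh 1 1 2) hL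
  exact one_ne_zero (h'_one.symm.trans h'_one_eq_zero)

/-- With the integral `h` on `A(F)` given on the basis by
`h(ã^p b̃^r c̃^s) = δ_{p0} δ_{r2} δ_{s2}`, one has `h(1) = 0`; consequently there is no
normalized two-sided integral on `A(F)`, i.e. `A(F)` admits no Haar measure. -/
theorem AF_no_haar_measure
    (Δ : AF →ₐ[ℂ] AF ⊗[ℂ] AF)
    (hΔa : Δ ta = ta ⊗ₜ[ℂ] ta + tb ⊗ₜ[ℂ] tc)
    (hΔb : Δ tb = ta ⊗ₜ[ℂ] tb + tb ⊗ₜ[ℂ] td)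
    (hΔc : Δ tc = tc ⊗ₜ[ℂ] ta + td ⊗ₜ[ℂ] tc)
    (hΔd : Δ td = tc ⊗ₜ[ℂ] tb + td ⊗ₜ[ℂ] td)
    (h : AF →ₗ[ℂ] ℂ)
    (hh : ∀ p r s : Fin 3, h (ta ^ (p : ℕ) * tb ^ (r : ℕ) * tc ^ (s : ℕ)) =
      if p = 0 ∧ r = 2 ∧ s = 2 then 1 else 0) :
    h 1 = 0 ∧
    ¬ ∃ h' : AF →ₗ[ℂ] ℂ,
      (∀ x : AF,
        (TensorProduct.rid ℂ AF) ((TensorProduct.map LinearMap.id h') (Δ x)) = h' x • 1) ∧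
      (∀ x : AF,
        (TensorProduct.lid ℂ AF) ((TensorProduct.map h' LinearMap.id) (Δ x)) = h' x • 1) ∧
      h' 1 = 1 :=
  AF_no_haar_measure_general Δ hΔa hΔb h hh

end
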